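/- arXiv:1205.6786 — 3 statements merged into one kernel-verified Lean document; each statement's English description precedes it below -/
import Mathlib

section
/- Assume there exists at least one function admissible for Λ (equivalently, mod_p(F) < ∞). Then there exists an extremal function for the p-modulus mod_p(F) if and only if for every measurable subfamily S ⊆ Λ with mod_p(S) = 0 one has μ(π⁻¹(S)) = 0. -/
open MeasureTheory ENNReal

/-- `f` is admissible for the subfamily `S ⊆ Λ` of leaves: `f` is a nonnegative measurable
function in `L^p(μ)` whose integral over the leaf `ν l` is at least `1` for
`π_*μ`-almost every `l ∈ S`. -/
def IsAdmissible {X Λ : Type*} [MeasurableSpace X] [MeasurableSpace Λ]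
    (μ : MeasureTheory.Measure X) (ν : Λ → MeasureTheory.Measure X) (π : X → Λ) (p : ℝ)
    (S : Set Λ) (f : X → ℝ) : Prop :=
  Measurable f ∧ (∀ x, 0 ≤ f x) ∧ MemLp f (ENNReal.ofReal p) μ ∧
    ∀ᵐ l ∂(μ.map π), l ∈ S → 1 ≤ ∫⁻ x, ENNReal.ofReal (f x) ∂(ν l)

/-- The `p`-modulus of the subfamily `S ⊆ Λ` of leaves: the infimum of the `L^p(μ)`-norms
of functions admissible for `S` (equal to `∞` when no admissible function exists). -/
noncomputable def pModulus {X Λ : Type*} [MeasurableSpace X] [MeasurableSpace Λ]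
    (μ : MeasureTheory.Measure X) (ν : Λ → MeasureTheory.Measure X) (π : X → Λ) (p : ℝ)
    (S : Set Λ) : ℝ≥0∞ :=
  ⨅ (f : X → ℝ) (_ : IsAdmissible μ ν π p S f), eLpNorm f (ENNReal.ofReal p) μ

/-- `f₀` is an extremal function for the `p`-modulus of the foliation (the whole family `Λ`):
it is admissible for `Λ` and its `L^p(μ)`-norm realizes `mod_p(F)`. -/
def IsExtremal {X Λ : Type*} [MeasurableSpace X] [MeasurableSpace Λ]
    (μ : MeasureTheory.Measure X) (ν : Λ → MeasureTheory.Measure X) (π : X → Λ) (p : ℝ)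
    (f₀ : X → ℝ) : Prop :=
  IsAdmissible μ ν π p Set.univ f₀ ∧
    eLpNorm f₀ (ENNReal.ofReal p) μ = pModulus μ ν π p Set.univ

/-!
If `f₀` is extremal and `mod_p(S) = 0`, then deleting `f₀` over `π⁻¹(S)` and adding an admissible
function for `S` of arbitrarily small norm keeps admissibility for `Λ` (by (K)), so `f₀` has no
`L^p`-mass over `π⁻¹(S)`; by (H) almost every leaf of `S` then carries no `f₀`-mass, which
admissibility only allows if `S` is `π_*μ`-null.

Conversely, midpoints of admissible functions are admissible, so uniform convexity of `t ↦ t ^ p`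
makes a minimizing sequence Cauchy in `L^p`. Along a subsequence with summable distances to the
limit `f₀`, the function `G = ∑ |f_{φ k} - f₀|` lies in `L^p`, so the leaves on which `G` has
infinite integral form a family of modulus zero, hence a null family by hypothesis; on every other
leaf the leaf integrals of the subsequence converge to that of `f₀`, which is therefore admissible
and extremal (Fuglede's argument).
-/

open Filter Topology NNReal

lemma rpow_add_div_two_le {p : ℝ} (hp : 1 ≤ p) {a b : ℝ} (ha : 0 ≤ a) (hb : 0 ≤ b) :
    ((a + b) / 2) ^ p ≤ (a ^ p + b ^ p) / 2 := by
  have h := (convexOn_rpow hp).2 (Set.mem_Ici.2 ha) (Set.mem_Ici.2 hb) (by norm_num : (0:ℝ) ≤ 1 / 2)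
    (by norm_num : (0:ℝ) ≤ 1 / 2) (by norm_num)
  simp only [smul_eq_mul] at h
  rw [show (a + b) / 2 = 1 / 2 * a + 1 / 2 * b by ring]
  linarith

lemma rpow_add_div_two_lt {p : ℝ} (hp : 1 < p) {a b : ℝ} (ha : 0 ≤ a) (hb : 0 ≤ b) (hab : a ≠ b) :
    ((a + b) / 2) ^ p < (a ^ p + b ^ p) / 2 := by
  have h := (strictConvexOn_rpow hp).2 (Set.mem_Ici.2 ha) (Set.mem_Ici.2 hb) hab
    (by norm_num : (0:ℝ) < 1 / 2) (by norm_num : (0:ℝ) < 1 / 2) (by norm_num)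
  simp only [smul_eq_mul] at h
  rw [show (a + b) / 2 = 1 / 2 * a + 1 / 2 * b by ring]
  linarith

lemma exists_rpow_abs_sub_add_mul_le {p : ℝ} (hp : 1 < p) {ε : ℝ} (hε : 0 < ε) :
    ∃ c > 0, ∀ a b : ℝ, 0 ≤ a → 0 ≤ b →
      |a - b| ^ p + c * ((a + b) / 2) ^ p ≤ (c + ε) * ((a ^ p + b ^ p) / 2) := by
  have hp0 : 0 < p := one_pos.trans hp
  set κ := min 1 (ε ^ p⁻¹)
  have hκ0 : 0 < κ := lt_min one_pos (Real.rpow_pos_of_pos hε _)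
  have hκ1 : κ ≤ 1 := min_le_left _ _
  have hκε : κ ^ p ≤ ε := by
    calc κ ^ p ≤ (ε ^ p⁻¹) ^ p := Real.rpow_le_rpow hκ0.le (min_le_right _ _) hp0.le
    _ = ε := Real.rpow_inv_rpow hε.le hp0.ne'
  set gap : ℝ → ℝ := fun t => (t ^ p + (1 - t) ^ p) / 2 - (1 / 2) ^ p
  set K := Set.Icc (0:ℝ) 1 ∩ {t | κ / 2 ≤ |2 * t - 1|}
  have hK : IsCompact K := isCompact_Icc.inter_right
    (isClosed_le continuous_const (by fun_prop))
  have hKne : K.Nonempty := ⟨1, by norm_num [K]; linarith⟩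
  have hgap : ContinuousOn gap K := by
    refine Continuous.continuousOn ?_
    have := Real.continuous_rpow_const hp0.le
    fun_prop
  obtain ⟨t₀, ⟨⟨ht₀0, ht₀1⟩, ht₀κ⟩, hmin⟩ := hK.exists_isMinOn hKne hgap
  have hγ : 0 < gap t₀ := by
    have h := rpow_add_div_two_lt hp ht₀0 (sub_nonneg.2 ht₀1) fun h => by
      rw [Set.mem_ofPred_eq, show 2 * t₀ - 1 = 0 by linarith, abs_zero] at ht₀κ
      linarith
    rw [add_sub_cancel] at h
    exact sub_pos.2 h
  refine ⟨(gap t₀)⁻¹, inv_pos.2 hγ, fun a b ha hb => ?_⟩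
  have hmid := rpow_add_div_two_le hp.le ha hb
  have hdiff : |a - b| ≤ a + b := abs_sub_le_iff.2 ⟨by linarith, by linarith⟩
  by_cases hab : |a - b| ≤ κ * ((a + b) / 2)
  · have : |a - b| ^ p ≤ ε * ((a ^ p + b ^ p) / 2) :=
      calc |a - b| ^ p ≤ (κ * ((a + b) / 2)) ^ p := Real.rpow_le_rpow (abs_nonneg _) hab hp0.le
      _ = κ ^ p * ((a + b) / 2) ^ p := Real.mul_rpow hκ0.le (by positivity)
      _ ≤ ε * ((a ^ p + b ^ p) / 2) := mul_le_mul hκε hmid (by positivity) hε.le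
    nlinarith [inv_pos.2 hγ]
  · -- rescale to `a + b = 1`, where compactness applies
    push Not at hab
    have hs : 0 < a + b := by nlinarith [abs_nonneg (a - b)]
    have hts : a / (a + b) ∈ K := by
      refine ⟨⟨div_nonneg ha hs.le, (div_le_one hs).2 (by linarith)⟩, ?_⟩
      rw [Set.mem_ofPred_eq, show 2 * (a / (a + b)) - 1 = (a - b) / (a + b) by field_simp; ring,
        abs_div, abs_of_pos hs, le_div_iff₀ hs]
      linarith
    have hscale : (a ^ p + b ^ p) / 2 - ((a + b) / 2) ^ p = (a + b) ^ p * gap (a / (a + b)) := by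
      simp only [gap, show 1 - a / (a + b) = b / (a + b) by field_simp; ring,
        Real.div_rpow ha hs.le, Real.div_rpow hb hs.le,
        show (a + b) / 2 = (a + b) * (1 / 2) by ring,
        Real.mul_rpow hs.le (by norm_num : (0:ℝ) ≤ 1 / 2)]
      field_simp
    have hγs : (a + b) ^ p * gap t₀ ≤ (a + b) ^ p * gap (a / (a + b)) :=
      mul_le_mul_of_nonneg_left (hmin hts) (by positivity)
    have : |a - b| ^ p ≤ (gap t₀)⁻¹ * ((a ^ p + b ^ p) / 2 - ((a + b) / 2) ^ p) := by
      rw [hscale, le_inv_mul_iff₀ hγ]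
      nlinarith [Real.rpow_le_rpow (abs_nonneg _) hdiff hp0.le]
    nlinarith [mul_nonneg hε.le (show 0 ≤ (a ^ p + b ^ p) / 2 by positivity)]

section Lp

variable {X : Type*} [MeasurableSpace X] {μ : Measure X}

lemma eLpNorm_ofReal_rpow_eq_lintegral {E : Type*} [ENorm E] {p : ℝ} (hp : 0 < p) (f : X → E) :
    eLpNorm f (ENNReal.ofReal p) μ ^ p = ∫⁻ x, ‖f x‖ₑ ^ p ∂μ := by
  have h := eLpNorm_nnreal_pow_eq_lintegral (μ := μ) (f := f) (p := p.toNNReal) (by simpa using hp)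
  rw [Real.coe_toNNReal _ hp.le] at h
  exact h

lemma exists_eLpNorm_sub_rpow_add_mul_le {p : ℝ} (hp : 1 < p) {ε : ℝ≥0} (hε : 0 < ε) :
    ∃ c : ℝ≥0, ∀ f g : X → ℝ, Measurable f → (∀ x, 0 ≤ f x) → (∀ x, 0 ≤ g x) →
      eLpNorm (f - g) (ENNReal.ofReal p) μ ^ p
          + c * eLpNorm (fun x => (f x + g x) / 2) (ENNReal.ofReal p) μ ^ p
        ≤ (c + ε) * ((eLpNorm f (ENNReal.ofReal p) μ ^ p
          + eLpNorm g (ENNReal.ofReal p) μ ^ p) / 2) := by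
  have hp0 : 0 < p := one_pos.trans hp
  obtain ⟨c, hc, hineq⟩ := exists_rpow_abs_sub_add_mul_le hp (NNReal.coe_pos.2 hε)
  have hpow (a : ℝ) : ‖a‖ₑ ^ p = ENNReal.ofReal (|a| ^ p) := by
    rw [Real.enorm_eq_ofReal_abs, ENNReal.ofReal_rpow_of_nonneg (abs_nonneg a) hp0.le]
  have hpt (a b : ℝ) (ha : 0 ≤ a) (hb : 0 ≤ b) : ‖a - b‖ₑ ^ p + c.toNNReal * ‖(a + b) / 2‖ₑ ^ p
      ≤ (c.toNNReal + ε) * ((‖a‖ₑ ^ p + ‖b‖ₑ ^ p) / 2) := by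
    have hab : 0 ≤ (a + b) / 2 := by positivity
    rw [hpow, hpow, hpow, hpow, abs_of_nonneg ha, abs_of_nonneg hb, abs_of_nonneg hab,
      ← ENNReal.ofReal_coe_nnreal, Real.coe_toNNReal _ hc.le, ← ENNReal.ofReal_coe_nnreal,
      ← ENNReal.ofReal_mul hc.le, ← ENNReal.ofReal_add (by positivity) (by positivity),
      ← ENNReal.ofReal_add hc.le ε.coe_nonneg, ← ENNReal.ofReal_add (by positivity) (by positivity),
      ← ENNReal.ofReal_ofNat 2, ← ENNReal.ofReal_div_of_pos two_pos,
      ← ENNReal.ofReal_mul (by positivity)]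
    exact ENNReal.ofReal_le_ofReal (hineq a b ha hb)
  refine ⟨c.toNNReal, fun f g hf hf0 hg0 => ?_⟩
  simp only [eLpNorm_ofReal_rpow_eq_lintegral hp0]
  calc ∫⁻ x, ‖(f - g) x‖ₑ ^ p ∂μ + c.toNNReal * ∫⁻ x, ‖(f x + g x) / 2‖ₑ ^ p ∂μ
      ≤ ∫⁻ x, (‖f x - g x‖ₑ ^ p + c.toNNReal * ‖(f x + g x) / 2‖ₑ ^ p) ∂μ := by
        rw [← lintegral_const_mul' _ _ coe_ne_top]
        exact le_lintegral_add _ _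
    _ ≤ ∫⁻ x, (c.toNNReal + ε) * ((‖f x‖ₑ ^ p + ‖g x‖ₑ ^ p) / 2) ∂μ :=
        lintegral_mono fun x => hpt _ _ (hf0 x) (hg0 x)
    _ = (c.toNNReal + ε) * ((∫⁻ x, ‖f x‖ₑ ^ p ∂μ + ∫⁻ x, ‖g x‖ₑ ^ p ∂μ) / 2) := by
        simp_rw [div_eq_mul_inv]
        rw [lintegral_const_mul' _ _ (by simp), lintegral_mul_const' _ _ (by simp),
          lintegral_add_left (hf.enorm.pow_const p)]

lemma le_mul_add_mul_of_add_mul_le {M D Mid A B c ε η : ℝ≥0∞} (hM : M ≠ ∞) (hc : c ≠ ∞)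
    (h : D + c * Mid ≤ (c + ε) * ((A + B) / 2)) (hMid : M ≤ Mid) (hA : A ≤ M + η)
    (hB : B ≤ M + η) : D ≤ c * η + ε * (M + η) := by
  have havg : (A + B) / 2 ≤ M + η :=
    calc (A + B) / 2 ≤ ((M + η) + (M + η)) / 2 := by gcongr
      _ = M + η := by rw [ENNReal.add_div, ENNReal.add_halves]
  refine ENNReal.le_of_add_le_add_left (ENNReal.mul_ne_top hc hM) ?_
  calc c * M + D ≤ D + c * Mid := by rw [add_comm]; gcongr
    _ ≤ (c + ε) * ((A + B) / 2) := h
    _ ≤ (c + ε) * (M + η) := by gcongr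
    _ = c * M + (c * η + ε * (M + η)) := by ring

lemma tendsto_eLpNorm_sub_of_le_eLpNorm_add_div_two {p : ℝ} (hp : 1 < p) {f : ℕ → X → ℝ}
    (hf : ∀ n, Measurable (f n)) (hf0 : ∀ n x, 0 ≤ f n x) {m : ℝ≥0∞} (hm : m ≠ ∞)
    (hmid : ∀ n k, m ≤ eLpNorm (fun x => (f n x + f k x) / 2) (ENNReal.ofReal p) μ)
    (hlim : Tendsto (fun n => eLpNorm (f n) (ENNReal.ofReal p) μ) atTop (𝓝 m)) :
    Tendsto (fun nk : ℕ × ℕ => eLpNorm (f nk.1 - f nk.2) (ENNReal.ofReal p) μ) atTop (𝓝 0) := by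
  have hp0 : 0 < p := one_pos.trans hp
  set q := ENNReal.ofReal p
  suffices h : Tendsto (fun nk : ℕ × ℕ => eLpNorm (f nk.1 - f nk.2) q μ ^ p) atTop (𝓝 0) by
    have := (ENNReal.continuous_rpow_const (y := p⁻¹)).tendsto 0 |>.comp h
    simpa [Function.comp_def, ← ENNReal.rpow_mul, mul_inv_cancel₀ hp0.ne',
      ENNReal.zero_rpow_of_pos (inv_pos.2 hp0)] using this
  have hmp : m ^ p ≠ ∞ := ENNReal.rpow_ne_top_of_nonneg hp0.le hm
  have hpow : Tendsto (fun n => eLpNorm (f n) q μ ^ p) atTop (𝓝 (m ^ p)) :=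
    (ENNReal.continuous_rpow_const.tendsto m).comp hlim
  rw [ENNReal.tendsto_nhds_zero]
  intro δ hδ
  obtain ⟨ε, hε, hεδ⟩ := ENNReal.exists_nnreal_pos_mul_lt
    (ENNReal.add_ne_top.2 ⟨hmp, one_ne_top⟩) (ENNReal.half_pos hδ.ne').ne'
  obtain ⟨c, hc⟩ := exists_eLpNorm_sub_rpow_add_mul_le (μ := μ) hp hε
  obtain ⟨η, hη, hηc⟩ := ENNReal.exists_nnreal_pos_mul_lt (coe_ne_top : (c : ℝ≥0∞) ≠ ∞)
    (ENNReal.half_pos hδ.ne').ne'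
  set η' : ℝ≥0 := min η 1
  have hev : ∀ᶠ n in atTop, eLpNorm (f n) q μ ^ p ≤ m ^ p + η' :=
    (hpow.eventually (gt_mem_nhds (ENNReal.lt_add_right hmp (by simpa [η'] using hη.ne')))).mono
      fun _ => le_of_lt
  rw [← prod_atTop_atTop_eq]
  filter_upwards [hev.prod_mk hev] with ⟨n, k⟩ ⟨hn, hk⟩
  calc eLpNorm (f n - f k) q μ ^ p ≤ c * η' + ε * (m ^ p + η') :=
        le_mul_add_mul_of_add_mul_le hmp coe_ne_top (hc _ _ (hf n) (hf0 n) (hf0 k))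
          (ENNReal.rpow_le_rpow (hmid n k) hp0.le) hn hk
    _ ≤ δ / 2 + δ / 2 := by
        gcongr
        · calc (c : ℝ≥0∞) * η' ≤ η * c := by rw [mul_comm]; gcongr; exact min_le_left _ _
            _ ≤ δ / 2 := hηc.le
        · calc (ε : ℝ≥0∞) * (m ^ p + η') ≤ ε * (m ^ p + 1) := by
                gcongr; exact_mod_cast min_le_right η 1
            _ ≤ δ / 2 := hεδ.le
    _ = δ := ENNReal.add_halves δ

lemma exists_memLp_tendsto_eLpNorm_sub {E : Type*} [NormedAddCommGroup E] [CompleteSpace E]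
    {p : ℝ≥0∞} [Fact (1 ≤ p)] {f : ℕ → X → E} (hf : ∀ n, MemLp (f n) p μ)
    (hcau : Tendsto (fun nk : ℕ × ℕ => eLpNorm (f nk.1 - f nk.2) p μ) atTop (𝓝 0)) :
    ∃ g, StronglyMeasurable g ∧ MemLp g p μ ∧
      Tendsto (fun n => eLpNorm (f n - g) p μ) atTop (𝓝 0) := by
  have hu : CauchySeq fun n => (hf n).toLp (f n) := by
    rw [cauchySeq_iff_tendsto_dist_atTop_0]
    simpa [Function.comp_def, dist_edist, Lp.edist_toLp_toLp] using
      (ENNReal.tendsto_toReal zero_ne_top).comp hcau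
  obtain ⟨g, hg⟩ := cauchySeq_tendsto_of_complete hu
  refine ⟨g, Lp.stronglyMeasurable g, Lp.memLp g, ?_⟩
  rw [← Lp.toLp_coeFn g (Lp.memLp g)] at hg
  exact (Lp.tendsto_Lp_iff_tendsto_eLpNorm'' f hf g (Lp.memLp g)).1 hg

lemma exists_tsum_comp_ne_top_of_tendsto_zero {u : ℕ → ℝ≥0∞} (hu : Tendsto u atTop (𝓝 0)) :
    ∃ φ : ℕ → ℕ, ∑' k, u (φ k) ≠ ∞ := by
  have (k : ℕ) : ∃ n, u n ≤ 2⁻¹ ^ k :=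
    (ENNReal.tendsto_nhds_zero.1 hu _ (ENNReal.pow_pos (by simp) k)).exists
  choose φ hφ using this
  refine ⟨φ, ne_top_of_le_ne_top ?_ (ENNReal.tsum_le_tsum hφ)⟩
  simp [ENNReal.tsum_geometric, ENNReal.one_sub_inv_two]

lemma eLpNorm_tsum_le {p : ℝ} (hp : 1 ≤ p) {F : ℕ → X → ℝ≥0∞} (hF : ∀ n, Measurable (F n)) :
    eLpNorm (fun x => ∑' n, F n x) (ENNReal.ofReal p) μ
      ≤ ∑' n, eLpNorm (F n) (ENNReal.ofReal p) μ := by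
  have hp0 : 0 < p := one_pos.trans_le hp
  have hq : 1 ≤ ENNReal.ofReal p := by simpa using hp
  have hpartial (K : ℕ) : ∫⁻ x, (∑ k ∈ Finset.range K, F k x) ^ p ∂μ
      ≤ (∑' n, eLpNorm (F n) (ENNReal.ofReal p) μ) ^ p := by
    have h := eLpNorm_sum_le (μ := μ) (s := Finset.range K)
      (fun k _ => (hF k).aestronglyMeasurable) hq
    rw [← ENNReal.rpow_le_rpow_iff hp0, eLpNorm_ofReal_rpow_eq_lintegral hp0] at h
    simp only [Finset.sum_apply, enorm_eq_self] at h
    exact h.trans (by gcongr; exact ENNReal.sum_le_tsum _)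
  rw [← ENNReal.rpow_le_rpow_iff hp0, eLpNorm_ofReal_rpow_eq_lintegral hp0]
  calc ∫⁻ x, ‖∑' n, F n x‖ₑ ^ p ∂μ = ∫⁻ x, ⨆ K, (∑ k ∈ Finset.range K, F k x) ^ p ∂μ :=
        lintegral_congr fun x => by
          rw [enorm_eq_self, ENNReal.tsum_eq_iSup_nat]
          exact (ENNReal.orderIsoRpow p hp0).map_iSup _
    _ = ⨆ K, ∫⁻ x, (∑ k ∈ Finset.range K, F k x) ^ p ∂μ :=
        lintegral_iSup (fun K => (Finset.measurable_sum _ fun k _ => hF k).pow_const p)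
          fun K L hKL x => ENNReal.rpow_le_rpow
            (Finset.sum_le_sum_of_subset (Finset.range_subset_range.2 hKL)) hp0.le
    _ ≤ _ := iSup_le hpartial

lemma indicator_ae_eq_zero_of_eLpNorm_le {E : Type*} [NormedAddCommGroup E] {p : ℝ} (hp : 0 < p)
    {f : X → E} (hf : AEStronglyMeasurable f μ) (hfin : eLpNorm f (ENNReal.ofReal p) μ ≠ ∞)
    {A : Set X} (hA : MeasurableSet A)
    (hle : eLpNorm f (ENNReal.ofReal p) μ ≤ eLpNorm (Aᶜ.indicator f) (ENNReal.ofReal p) μ) :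
    A.indicator f =ᵐ[μ] 0 := by
  have hsplit : eLpNorm f (ENNReal.ofReal p) μ ^ p
      = eLpNorm (Aᶜ.indicator f) (ENNReal.ofReal p) μ ^ p
        + eLpNorm (A.indicator f) (ENNReal.ofReal p) μ ^ p := by
    simp only [eLpNorm_ofReal_rpow_eq_lintegral hp]
    rw [← lintegral_add_left' ((hf.indicator hA.compl).enorm.pow_const p)]
    refine lintegral_congr fun x => ?_
    by_cases hx : x ∈ A <;> simp [hx, ENNReal.zero_rpow_of_pos hp]
  have hfin' : eLpNorm (Aᶜ.indicator f) (ENNReal.ofReal p) μ ^ p ≠ ∞ :=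
    ne_top_of_le_ne_top (ENNReal.rpow_ne_top_of_nonneg hp.le hfin) (hsplit ▸ le_self_add)
  have hzero : eLpNorm (A.indicator f) (ENNReal.ofReal p) μ ^ p = 0 := by
    have h := ENNReal.rpow_le_rpow hle hp.le
    rw [hsplit] at h
    exact le_zero_iff.1 ((ENNReal.add_le_add_iff_left hfin').1 (by simpa using h))
  rwa [ENNReal.rpow_eq_zero_iff_of_pos hp,
    eLpNorm_eq_zero_iff (hf.indicator hA) (by simpa using hp)] at hzero

lemma le_lintegral_ofReal_of_lintegral_tsum_ne_top {f : ℕ → X → ℝ} {g : X → ℝ}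
    (hf : ∀ k, Measurable (f k)) (hg : Measurable g)
    (hsum : ∫⁻ x, ∑' k, ‖f k x - g x‖ₑ ∂μ ≠ ∞) {a : ℝ≥0∞}
    (ha : ∀ k, a ≤ ∫⁻ x, ENNReal.ofReal (f k x) ∂μ) :
    a ≤ ∫⁻ x, ENNReal.ofReal (g x) ∂μ := by
  rw [lintegral_tsum (f := fun k x => ‖f k x - g x‖ₑ)
    fun k => ((hf k).sub hg).enorm.aemeasurable] at hsum
  have hlim := (tendsto_const_nhds (x := ∫⁻ x, ENNReal.ofReal (g x) ∂μ)).add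
    (ENNReal.tendsto_atTop_zero_of_tsum_ne_top hsum)
  rw [add_zero] at hlim
  refine ge_of_tendsto' hlim fun k => (ha k).trans ?_
  rw [← lintegral_add_left hg.ennreal_ofReal]
  refine lintegral_mono fun x => ?_
  calc ENNReal.ofReal (f k x) = ENNReal.ofReal (g x + (f k x - g x)) := by ring_nf
    _ ≤ ENNReal.ofReal (g x) + ENNReal.ofReal (f k x - g x) := ENNReal.ofReal_add_le
    _ ≤ ENNReal.ofReal (g x) + ‖f k x - g x‖ₑ := by
        rw [Real.enorm_eq_ofReal_abs]; gcongr; exact le_abs_self _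

end Lp

section Modulus

variable {X Λ : Type*} [MeasurableSpace X] [MeasurableSpace Λ] {μ : Measure X}
  {ν : Λ → Measure X} {π : X → Λ} {p : ℝ}

lemma IsAdmissible.mono {S T : Set Λ} {f : X → ℝ} (hf : IsAdmissible μ ν π p T f) (hST : S ⊆ T) :
    IsAdmissible μ ν π p S f :=
  ⟨hf.1, hf.2.1, hf.2.2.1, hf.2.2.2.mono fun _ hl hlS => hl (hST hlS)⟩

lemma IsAdmissible.add_div_two {S : Set Λ} {f g : X → ℝ} (hf : IsAdmissible μ ν π p S f)
    (hg : IsAdmissible μ ν π p S g) : IsAdmissible μ ν π p S fun x => (f x + g x) / 2 := by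
  refine ⟨(hf.1.add hg.1).div_const 2, fun x => by linarith [hf.2.1 x, hg.2.1 x], ?_, ?_⟩
  · simpa [div_eq_inv_mul] using (hf.2.2.1.add hg.2.2.1).const_mul 2⁻¹
  · filter_upwards [hf.2.2.2, hg.2.2.2] with l hfl hgl hl
    have hhalf (x : X) : ENNReal.ofReal ((f x + g x) / 2)
        = (ENNReal.ofReal (f x) + ENNReal.ofReal (g x)) / 2 := by
      rw [ENNReal.ofReal_div_of_pos two_pos, ENNReal.ofReal_add (hf.2.1 x) (hg.2.1 x),
        ENNReal.ofReal_ofNat]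
    simp_rw [hhalf, div_eq_mul_inv]
    rw [lintegral_mul_const' _ _ (by simp), lintegral_add_left hf.1.ennreal_ofReal,
      ← div_eq_mul_inv, ENNReal.le_div_iff_mul_le (by simp) (by simp), one_mul,
      ← one_add_one_eq_two]
    exact add_le_add (hfl hl) (hgl hl)

lemma IsAdmissible.indicator_preimage_compl_add (hπ : Measurable π)
    (hK : ∀ l : Λ, ν l {x | π x ≠ l} = 0) {S : Set Λ} (hS : MeasurableSet S) {f g : X → ℝ}
    (hf : IsAdmissible μ ν π p Set.univ f) (hg : IsAdmissible μ ν π p S g) :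
    IsAdmissible μ ν π p Set.univ ((π ⁻¹' S)ᶜ.indicator f + g) := by
  refine ⟨(hf.1.indicator (hπ hS).compl).add hg.1,
    fun x => add_nonneg (Set.indicator_nonneg (fun x _ => hf.2.1 x) x) (hg.2.1 x),
    (hf.2.2.1.indicator (hπ hS).compl).add hg.2.2.1, ?_⟩
  filter_upwards [hf.2.2.2, hg.2.2.2] with l hfl hgl _
  by_cases hl : l ∈ S
  · refine (hgl hl).trans (lintegral_mono fun x => ENNReal.ofReal_le_ofReal ?_)
    exact le_add_of_nonneg_left (Set.indicator_nonneg (fun x _ => hf.2.1 x) x)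
  · refine (hfl trivial).trans (lintegral_mono_ae ?_)
    filter_upwards [measure_eq_zero_iff_ae_notMem.1 (hK l)] with x hx
    have hxS : x ∈ (π ⁻¹' S)ᶜ := by simp_all
    simp only [Pi.add_apply, Set.indicator_of_mem hxS]
    exact ENNReal.ofReal_le_ofReal (le_add_of_nonneg_right (hg.2.1 x))

lemma IsExtremal.eLpNorm_le_eLpNorm_indicator_preimage_compl (hπ : Measurable π)
    (hK : ∀ l : Λ, ν l {x | π x ≠ l} = 0) (hp : 1 ≤ p) {f₀ : X → ℝ}
    (hf₀ : IsExtremal μ ν π p f₀) {S : Set Λ} (hS : MeasurableSet S)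
    (h0 : pModulus μ ν π p S = 0) :
    eLpNorm f₀ (ENNReal.ofReal p) μ ≤ eLpNorm ((π ⁻¹' S)ᶜ.indicator f₀) (ENNReal.ofReal p) μ := by
  set u := (π ⁻¹' S)ᶜ.indicator f₀
  have h (g : X → ℝ) (hg : IsAdmissible μ ν π p S g) :
      eLpNorm f₀ (ENNReal.ofReal p) μ - eLpNorm u (ENNReal.ofReal p) μ
        ≤ eLpNorm g (ENNReal.ofReal p) μ := by
    rw [tsub_le_iff_left, hf₀.2]
    exact (iInf₂_le _ (hf₀.1.indicator_preimage_compl_add hπ hK hS hg)).trans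
      (eLpNorm_add_le (hf₀.1.1.indicator (hπ hS).compl).aestronglyMeasurable
        hg.1.aestronglyMeasurable (by simpa using hp))
  exact tsub_eq_zero_iff_le.1 (le_zero_iff.1 ((le_iInf₂ h).trans_eq h0))

lemma IsAdmissible.measure_preimage_eq_zero (hπ : Measurable π)
    (hK : ∀ l : Λ, ν l {x | π x ≠ l} = 0)
    (hH : ∀ N : Set X, MeasurableSet N → μ N = 0 → ∀ᵐ l ∂(μ.map π), ν l N = 0)
    {S : Set Λ} (hS : MeasurableSet S) {f : X → ℝ} (hf : IsAdmissible μ ν π p S f)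
    (hzero : (π ⁻¹' S).indicator f =ᵐ[μ] 0) : μ (π ⁻¹' S) = 0 := by
  set N := {x | (π ⁻¹' S).indicator f x ≠ 0}
  have hN : MeasurableSet N := (hf.1.indicator (hπ hS)) (measurableSet_singleton 0).compl
  rw [← Measure.map_apply hπ hS, measure_eq_zero_iff_ae_notMem]
  filter_upwards [hH N hN (ae_iff.1 hzero), hf.2.2.2] with l hlN hl hlS
  have hleaf : ∫⁻ x, ENNReal.ofReal (f x) ∂ν l = 0 := by
    refine lintegral_eq_zero_iff' hf.1.ennreal_ofReal.aemeasurable |>.2 ?_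
    filter_upwards [measure_eq_zero_iff_ae_notMem.1 hlN,
      measure_eq_zero_iff_ae_notMem.1 (hK l)] with x hxN hxl
    have hx : x ∈ π ⁻¹' S := by simp_all
    simp_all [N]
  simpa [hleaf] using hl hlS

lemma IsExtremal.measure_preimage_eq_zero (hπ : Measurable π)
    (hK : ∀ l : Λ, ν l {x | π x ≠ l} = 0)
    (hH : ∀ N : Set X, MeasurableSet N → μ N = 0 → ∀ᵐ l ∂(μ.map π), ν l N = 0) (hp : 1 ≤ p)
    {f₀ : X → ℝ} (hf₀ : IsExtremal μ ν π p f₀) {S : Set Λ} (hS : MeasurableSet S)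
    (h0 : pModulus μ ν π p S = 0) : μ (π ⁻¹' S) = 0 :=
  (hf₀.1.mono (Set.subset_univ S)).measure_preimage_eq_zero hπ hK hH hS <|
    indicator_ae_eq_zero_of_eLpNorm_le (by linarith) hf₀.1.1.aestronglyMeasurable
      hf₀.1.2.2.1.2.ne (hπ hS) (hf₀.eLpNorm_le_eLpNorm_indicator_preimage_compl hπ hK hp hS h0)

lemma exists_seq_isAdmissible_tendsto_pModulus {S : Set Λ} (h : pModulus μ ν π p S ≠ ∞) :
    ∃ f : ℕ → X → ℝ, (∀ n, IsAdmissible μ ν π p S (f n)) ∧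
      Tendsto (fun n => eLpNorm (f n) (ENNReal.ofReal p) μ) atTop (𝓝 (pModulus μ ν π p S)) := by
  have (n : ℕ) : ∃ f, IsAdmissible μ ν π p S f ∧
      eLpNorm f (ENNReal.ofReal p) μ < pModulus μ ν π p S + (n : ℝ≥0∞)⁻¹ := by
    have := ENNReal.lt_add_right h (ENNReal.inv_ne_zero.2 (natCast_ne_top n))
    simpa [pModulus, iInf_lt_iff] using this
  choose f hf hlt using this
  refine ⟨f, hf, tendsto_of_tendsto_of_tendsto_of_le_of_le tendsto_const_nhds ?_
    (fun n => iInf₂_le _ (hf n)) fun n => (hlt n).le⟩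
  simpa using tendsto_const_nhds.add ENNReal.tendsto_inv_nat_nhds_zero

lemma pModulus_setOf_lintegral_eq_top
    (hH : ∀ N : Set X, MeasurableSet N → μ N = 0 → ∀ᵐ l ∂(μ.map π), ν l N = 0) (hp : 0 < p)
    {G : X → ℝ≥0∞} (hG : Measurable G) (hGp : eLpNorm G (ENNReal.ofReal p) μ ≠ ∞) :
    pModulus μ ν π p {l | ∫⁻ x, G x ∂ν l = ∞} = 0 := by
  have hGfin : μ {x | G x = ∞} = 0 := by
    have h : ∫⁻ x, G x ^ p ∂μ ≠ ∞ := by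
      simpa [eLpNorm_ofReal_rpow_eq_lintegral hp] using
        ENNReal.rpow_ne_top_of_nonneg hp.le hGp
    refine measure_mono_null (fun x hx => ?_) (ae_iff.1 (ae_lt_top (hG.pow_const p) h))
    simp_all
  have hle (ε : ℝ≥0) (hε : 0 < ε) :
      pModulus μ ν π p {l | ∫⁻ x, G x ∂ν l = ∞} ≤ ε * eLpNorm G (ENNReal.ofReal p) μ := by
    set h : X → ℝ := fun x => (ε * G x).toReal
    have hmeas : Measurable h := (measurable_const.mul hG).ennreal_toReal
    have hnorm : eLpNorm h (ENNReal.ofReal p) μ ≤ ε * eLpNorm G (ENNReal.ofReal p) μ :=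
      eLpNorm_le_nnreal_smul_eLpNorm_of_ae_le_mul' (ae_of_all _ fun x => by
        simpa [h, Real.enorm_eq_ofReal_abs] using mul_le_mul_right ENNReal.ofReal_toReal_le _) _
    refine (iInf₂_le h ⟨hmeas, fun x => ENNReal.toReal_nonneg,
      ⟨hmeas.aestronglyMeasurable, hnorm.trans_lt (ENNReal.mul_lt_top coe_lt_top hGp.lt_top)⟩,
      ?_⟩).trans hnorm
    filter_upwards [hH _ (hG (measurableSet_singleton ∞)) hGfin] with l hl hlT
    have hae : ∀ᵐ x ∂ν l, ENNReal.ofReal (h x) = ε * G x := by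
      filter_upwards [measure_eq_zero_iff_ae_notMem.1 hl] with x hx
      exact ENNReal.ofReal_toReal (ENNReal.mul_ne_top coe_ne_top hx)
    rw [lintegral_congr_ae hae, lintegral_const_mul _ hG, show ∫⁻ x, G x ∂ν l = ∞ from hlT,
      ENNReal.mul_top (by simpa using hε.ne')]
    exact le_top
  by_contra hne
  obtain ⟨ε, hε, hlt⟩ := ENNReal.exists_nnreal_pos_mul_lt hGp hne
  exact (hle ε hε).not_gt hlt

lemma IsAdmissible.of_tendsto_eLpNorm (hπ : Measurable π) (hν : Measurable ν)
    (hH : ∀ N : Set X, MeasurableSet N → μ N = 0 → ∀ᵐ l ∂(μ.map π), ν l N = 0) (hp : 1 ≤ p)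
    (hZ : ∀ S : Set Λ, MeasurableSet S → pModulus μ ν π p S = 0 → μ (π ⁻¹' S) = 0)
    {f : ℕ → X → ℝ} (hf : ∀ n, IsAdmissible μ ν π p Set.univ (f n)) {g : X → ℝ}
    (hg : Measurable g) (hg0 : ∀ x, 0 ≤ g x) (hgp : MemLp g (ENNReal.ofReal p) μ)
    (hlim : Tendsto (fun n => eLpNorm (f n - g) (ENNReal.ofReal p) μ) atTop (𝓝 0)) :
    IsAdmissible μ ν π p Set.univ g := by
  obtain ⟨φ, hφ⟩ := exists_tsum_comp_ne_top_of_tendsto_zero hlim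
  set G : X → ℝ≥0∞ := fun x => ∑' k, ‖f (φ k) x - g x‖ₑ
  have hG : Measurable G := Measurable.tsum fun k => ((hf (φ k)).1.sub hg).enorm
  have hGp : eLpNorm G (ENNReal.ofReal p) μ ≠ ∞ :=
    ne_top_of_le_ne_top hφ <| (eLpNorm_tsum_le hp fun k => ((hf (φ k)).1.sub hg).enorm).trans_eq
      (by simp_rw [← eLpNorm_enorm (f (φ _) - g)])
  set T := {l | ∫⁻ x, G x ∂ν l = ∞}
  have hT : MeasurableSet T := (Measure.measurable_lintegral hG).comp hν (measurableSet_singleton ∞)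
  have hTnull : μ.map π T = 0 := by
    rw [Measure.map_apply hπ hT]
    exact hZ T hT (pModulus_setOf_lintegral_eq_top hH (by linarith) hG hGp)
  refine ⟨hg, hg0, hgp, ?_⟩
  filter_upwards [measure_eq_zero_iff_ae_notMem.1 hTnull,
    ae_all_iff.2 fun k => (hf (φ k)).2.2.2] with l hlT hl _
  exact le_lintegral_ofReal_of_lintegral_tsum_ne_top (fun k => (hf (φ k)).1) hg hlT
    fun k => hl k trivial

lemma exists_isExtremal (hπ : Measurable π) (hν : Measurable ν)
    (hH : ∀ N : Set X, MeasurableSet N → μ N = 0 → ∀ᵐ l ∂(μ.map π), ν l N = 0) (hp : 1 < p)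
    (hadm : ∃ f, IsAdmissible μ ν π p Set.univ f)
    (hZ : ∀ S : Set Λ, MeasurableSet S → pModulus μ ν π p S = 0 → μ (π ⁻¹' S) = 0) :
    ∃ f₀, IsExtremal μ ν π p f₀ := by
  have : Fact (1 ≤ ENNReal.ofReal p) := ⟨by simpa using hp.le⟩
  obtain ⟨f₁, hf₁⟩ := hadm
  have hm : pModulus μ ν π p Set.univ ≠ ∞ := ((iInf₂_le f₁ hf₁).trans_lt hf₁.2.2.1.2).ne
  obtain ⟨f, hf, hlim⟩ := exists_seq_isAdmissible_tendsto_pModulus hm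
  obtain ⟨g, hg, hgp, hfg⟩ := exists_memLp_tendsto_eLpNorm_sub (fun n => (hf n).2.2.1) <|
    tendsto_eLpNorm_sub_of_le_eLpNorm_add_div_two hp (fun n => (hf n).1) (fun n => (hf n).2.1) hm
      (fun n k => iInf₂_le _ ((hf n).add_div_two (hf k))) hlim
  set f₀ := fun x => max (g x) 0
  -- `f n ≥ 0`, so replacing `g` by its positive part only brings it closer to `f n`
  have hff₀ : Tendsto (fun n => eLpNorm (f n - f₀) (ENNReal.ofReal p) μ) atTop (𝓝 0) :=
    tendsto_of_tendsto_of_tendsto_of_le_of_le tendsto_const_nhds hfg (fun _ => zero_le)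
      fun n => eLpNorm_mono fun x => by
        simpa [f₀, max_eq_left ((hf n).2.1 x)] using abs_max_sub_max_le_abs (f n x) (g x) 0
  have hf₀ : IsAdmissible μ ν π p Set.univ f₀ :=
    .of_tendsto_eLpNorm hπ hν hH hp.le hZ hf (hg.measurable.max measurable_const)
      (fun x => le_max_right _ _) hgp.pos_part hff₀
  refine ⟨f₀, hf₀, le_antisymm (ge_of_tendsto' (by simpa using hff₀.add hlim) fun n => ?_)
    (iInf₂_le _ hf₀)⟩
  calc eLpNorm f₀ (ENNReal.ofReal p) μ = eLpNorm (f₀ - f n + f n) (ENNReal.ofReal p) μ := by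
        rw [sub_add_cancel]
    _ ≤ eLpNorm (f₀ - f n) (ENNReal.ofReal p) μ + eLpNorm (f n) (ENNReal.ofReal p) μ :=
        eLpNorm_add_le (hf₀.1.sub (hf n).1).aestronglyMeasurable (hf n).1.aestronglyMeasurable
          Fact.out
    _ = eLpNorm (f n - f₀) (ENNReal.ofReal p) μ + eLpNorm (f n) (ENNReal.ofReal p) μ := by
        rw [eLpNorm_sub_comm]

end Modulus

theorem statement0_general {X Λ : Type*} [MeasurableSpace X] [MeasurableSpace Λ]
    (μ : MeasureTheory.Measure X) (ν : Λ → MeasureTheory.Measure X)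
    (π : X → Λ) (hπ : Measurable π) (hν : Measurable ν)
    (hK : ∀ l : Λ, ν l {x | π x ≠ l} = 0)
    (hH : ∀ N : Set X, MeasurableSet N → μ N = 0 → ∀ᵐ l ∂(μ.map π), ν l N = 0)
    (p : ℝ) (hp : 1 < p)
    (hadm : ∃ f, IsAdmissible μ ν π p Set.univ f) :
    (∃ f₀, IsExtremal μ ν π p f₀) ↔
      ∀ S : Set Λ, MeasurableSet S → pModulus μ ν π p S = 0 → μ (π ⁻¹' S) = 0 :=
  ⟨fun ⟨_, hf₀⟩ _ hS h0 => hf₀.measure_preimage_eq_zero hπ hK hH hp.le hS h0,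
    exists_isExtremal hπ hν hH hp hadm⟩

/-- Assuming an admissible function for the whole family exists
(equivalently, mod_p(F) < ∞), an extremal function for the p-modulus exists if and only if
every measurable subfamily S ⊆ Λ with mod_p(S) = 0 satisfies μ(π⁻¹(S)) = 0. -/
theorem statement0 {X Λ : Type*} [MeasurableSpace X] [MeasurableSpace Λ]
    (μ : MeasureTheory.Measure X) [SigmaFinite μ] (ν : Λ → MeasureTheory.Measure X)
    (π : X → Λ) (hπ : Measurable π) (hν : Measurable ν)
    (hK : ∀ l : Λ, ν l {x | π x ≠ l} = 0)
    (hH : ∀ N : Set X, MeasurableSet N → μ N = 0 → ∀ᵐ l ∂(μ.map π), ν l N = 0)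
    (p : ℝ) (hp : 1 < p)
    (hadm : ∃ f, IsAdmissible μ ν π p Set.univ f) :
    (∃ f₀, IsExtremal μ ν π p f₀) ↔
      ∀ S : Set Λ, MeasurableSet S → pModulus μ ν π p S = 0 → μ (π ⁻¹' S) = 0 :=
  statement0_general μ ν π hπ hν hK hH p hp hadm
end

section
/- If f₀ is an extremal function for the p-modulus mod_p(F) and mod_p(F) > 0, then ∫_X f₀ dν_λ = 1 for π_*μ-almost every λ ∈ Λ (i.e. the leaf integral of f₀ equals 1 on almost every leaf). -/
/-!
If the leaf integral of an extremal `f₀` were at least `c > 1` on a `π_*μ`-nonnull set `A` of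
leaves, then `f₀ / c` on `π⁻¹(A)` (and `f₀` elsewhere) would still be admissible, since each leaf
measure lives on its own fibre. By (H), `f₀ > 0` on a `μ`-nonnull part of `π⁻¹(A)`, so this
competitor has strictly smaller `L^p` norm, contradicting extremality. Letting `c ↓ 1` along the
rationals gives leaf integrals `≤ 1` almost everywhere, and admissibility gives `≥ 1`.
-/

open MeasureTheory ENNReal

section Leaves

variable {X Λ : Type*} {π : X → Λ} {A : Set Λ} {c : ℝ} {f : X → ℝ}

open Classical in
noncomputable def rescaleOn (π : X → Λ) (A : Set Λ) (c : ℝ) (f : X → ℝ) : X → ℝ :=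
  fun x => if π x ∈ A then f x / c else f x

lemma rescaleOn_nonneg (hc : 0 ≤ c) {x : X} (hfx : 0 ≤ f x) : 0 ≤ rescaleOn π A c f x := by
  unfold rescaleOn; split_ifs
  exacts [div_nonneg hfx hc, hfx]

lemma rescaleOn_le (hc : 1 ≤ c) {x : X} (hfx : 0 ≤ f x) : rescaleOn π A c f x ≤ f x := by
  unfold rescaleOn; split_ifs
  exacts [div_le_self hfx hc, le_rfl]

lemma rescaleOn_lt (hc : 1 < c) {x : X} (hx : π x ∈ A) (hfx : 0 < f x) :
    rescaleOn π A c f x < f x := by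
  simpa [rescaleOn, hx] using div_lt_self hfx hc

variable [MeasurableSpace X] {ν : Λ → Measure X}

lemma ae_fiber (hK : ∀ l : Λ, ν l {x | π x ≠ l} = 0) (l : Λ) : ∀ᵐ x ∂(ν l), π x = l :=
  ae_iff.2 (hK l)

lemma lintegral_rescaleOn_of_mem (hK : ∀ l : Λ, ν l {x | π x ≠ l} = 0) (hf : Measurable f)
    (hc : 0 < c) {l : Λ} (hl : l ∈ A) :
    ∫⁻ x, ENNReal.ofReal (rescaleOn π A c f x) ∂(ν l)
      = (∫⁻ x, ENNReal.ofReal (f x) ∂(ν l)) / ENNReal.ofReal c := by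
  have hfiber : ∀ᵐ x ∂(ν l), ENNReal.ofReal (rescaleOn π A c f x)
      = ENNReal.ofReal (f x) * (ENNReal.ofReal c)⁻¹ := by
    filter_upwards [ae_fiber hK l] with x rfl
    rw [rescaleOn, if_pos hl, ENNReal.ofReal_div_of_pos hc, div_eq_mul_inv]
  rw [lintegral_congr_ae hfiber, lintegral_mul_const _ hf.ennreal_ofReal, div_eq_mul_inv]

lemma lintegral_rescaleOn_of_notMem (hK : ∀ l : Λ, ν l {x | π x ≠ l} = 0) {l : Λ}
    (hl : l ∉ A) :
    ∫⁻ x, ENNReal.ofReal (rescaleOn π A c f x) ∂(ν l) = ∫⁻ x, ENNReal.ofReal (f x) ∂(ν l) := by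
  refine lintegral_congr_ae ?_
  filter_upwards [ae_fiber hK l] with x rfl
  rw [rescaleOn, if_neg hl]

variable [MeasurableSpace Λ] {μ : Measure X} {p : ℝ}

lemma isAdmissible_rescaleOn (hπ : Measurable π) (hK : ∀ l : Λ, ν l {x | π x ≠ l} = 0)
    (hA : MeasurableSet A) (hc : 1 ≤ c)
    (hAc : ∀ l ∈ A, ENNReal.ofReal c ≤ ∫⁻ x, ENNReal.ofReal (f x) ∂(ν l))
    (hf : IsAdmissible μ ν π p Set.univ f) :
    IsAdmissible μ ν π p Set.univ (rescaleOn π A c f) := by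
  obtain ⟨hmeas, hnn, hmem, hadm⟩ := hf
  have hc0 : 0 < c := zero_lt_one.trans_le hc
  have hmeas' : Measurable (rescaleOn π A c f) := Measurable.ite (hπ hA) (hmeas.div_const c) hmeas
  have hnn' (x : X) : 0 ≤ rescaleOn π A c f x := rescaleOn_nonneg hc0.le (hnn x)
  refine ⟨hmeas', hnn', hmem.mono hmeas'.aestronglyMeasurable (.of_forall fun x => ?_), ?_⟩
  · rw [Real.norm_of_nonneg (hnn' x), Real.norm_of_nonneg (hnn x)]
    exact rescaleOn_le hc (hnn x)
  filter_upwards [hadm] with l hl _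
  by_cases hlA : l ∈ A
  · rw [lintegral_rescaleOn_of_mem hK hmeas hc0 hlA,
      ENNReal.le_div_iff_mul_le (.inl (by simpa using hc0)) (.inl ENNReal.ofReal_ne_top), one_mul]
    exact hAc l hlA
  · rw [lintegral_rescaleOn_of_notMem hK hlA]
    exact hl trivial

end Leaves

lemma eLpNorm_lt_eLpNorm_of_norm_le_of_lt_on {α E F : Type*} [MeasurableSpace α]
    [NormedAddCommGroup E] [NormedAddCommGroup F] {μ : Measure α} {p : ℝ≥0∞} {f : α → E}
    {g : α → F} {s : Set α} (hp0 : p ≠ 0) (hp : p ≠ ∞) (hg : MemLp g p μ)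
    (hle : ∀ x, ‖f x‖ ≤ ‖g x‖) (hs : μ s ≠ 0) (hlt : ∀ x ∈ s, ‖f x‖ < ‖g x‖) :
    eLpNorm f p μ < eLpNorm g p μ := by
  have hp_pos : 0 < p.toReal := ENNReal.toReal_pos hp0 hp
  have hle_pow (x : α) : ‖f x‖ₑ ^ p.toReal ≤ ‖g x‖ₑ ^ p.toReal :=
    ENNReal.rpow_le_rpow (enorm_le_iff_norm_le.2 (hle x)) hp_pos.le
  have hlt_pow (x : α) (hx : x ∈ s) : ‖f x‖ₑ ^ p.toReal < ‖g x‖ₑ ^ p.toReal := by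
    refine ENNReal.rpow_lt_rpow ?_ hp_pos
    simpa only [← not_le, enorm_le_iff_norm_le] using hlt x hx
  have hg_fin : ∫⁻ x, ‖g x‖ₑ ^ p.toReal ∂μ ≠ ∞ :=
    (lintegral_rpow_enorm_lt_top_of_eLpNorm_lt_top hp0 hp hg.2).ne
  have hint_lt : ∫⁻ x, ‖f x‖ₑ ^ p.toReal ∂μ < ∫⁻ x, ‖g x‖ₑ ^ p.toReal ∂μ :=
    lintegral_strict_mono_of_ae_le_of_ae_lt_on (hg.1.enorm.pow_const _)
      (ne_top_of_le_ne_top hg_fin (lintegral_mono hle_pow)) (.of_forall hle_pow) hs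
      (.of_forall hlt_pow)
  rw [eLpNorm_eq_lintegral_rpow_enorm_toReal hp0 hp, eLpNorm_eq_lintegral_rpow_enorm_toReal hp0 hp]
  exact ENNReal.rpow_lt_rpow hint_lt (by positivity)

lemma ae_le_of_forall_lt_ofReal {α : Type*} [MeasurableSpace α] {m : Measure α}
    {F : α → ℝ≥0∞} {a : ℝ≥0∞}
    (h : ∀ c : ℝ, a < ENNReal.ofReal c → ∀ᵐ x ∂m, F x < ENNReal.ofReal c) :
    ∀ᵐ x ∂m, F x ≤ a := by
  have hrat : ∀ᵐ x ∂m, ∀ q : ℚ, a < ENNReal.ofReal q → F x < ENNReal.ofReal q := by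
    refine ae_all_iff.2 fun q => ?_
    by_cases hq : a < ENNReal.ofReal q
    · exact (h q hq).mono fun _ hx _ => hx
    · exact .of_forall fun _ h => absurd h hq
  filter_upwards [hrat] with x hx
  by_contra! hgt
  obtain ⟨q, -, haq, hqF⟩ := ENNReal.lt_iff_exists_rat_btwn.1 hgt
  exact (hx q haq).not_gt hqF

section Extremal

variable {X Λ : Type*} [MeasurableSpace X] [MeasurableSpace Λ]
  {μ : Measure X} {ν : Λ → Measure X} {π : X → Λ}

lemma measure_preimage_inter_pos_ne_zero (hπ : Measurable π)
    (hK : ∀ l : Λ, ν l {x | π x ≠ l} = 0)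
    (hH : ∀ N : Set X, MeasurableSet N → μ N = 0 → ∀ᵐ l ∂(μ.map π), ν l N = 0)
    {f : X → ℝ} (hf : Measurable f) {A : Set Λ} (hA : MeasurableSet A)
    (hA0 : μ.map π A ≠ 0) (hpos : ∀ l ∈ A, 0 < ∫⁻ x, ENNReal.ofReal (f x) ∂(ν l)) :
    μ (π ⁻¹' A ∩ {x | 0 < f x}) ≠ 0 := by
  intro hB
  refine hA0 (measure_eq_zero_iff_ae_notMem.2 ?_)
  filter_upwards [hH _ ((hπ hA).inter (measurableSet_lt measurable_const hf)) hB] with l hl hlA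
  have hzero : ∀ᵐ x ∂(ν l), ENNReal.ofReal (f x) = 0 := by
    filter_upwards [ae_fiber hK l, measure_eq_zero_iff_ae_notMem.1 hl] with x rfl hx
    exact ENNReal.ofReal_eq_zero.2 (not_lt.1 fun h => hx ⟨hlA, h⟩)
  exact (hpos l hlA).ne' (lintegral_eq_zero_iff' hf.ennreal_ofReal.aemeasurable |>.2 hzero)

lemma IsExtremal.ae_lintegral_lt (hπ : Measurable π) (hν : Measurable ν)
    (hK : ∀ l : Λ, ν l {x | π x ≠ l} = 0)
    (hH : ∀ N : Set X, MeasurableSet N → μ N = 0 → ∀ᵐ l ∂(μ.map π), ν l N = 0)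
    {p : ℝ} (hp : 0 < p) {f₀ : X → ℝ} (hf₀ : IsExtremal μ ν π p f₀) {c : ℝ} (hc : 1 < c) :
    ∀ᵐ l ∂(μ.map π), ∫⁻ x, ENNReal.ofReal (f₀ x) ∂(ν l) < ENNReal.ofReal c := by
  obtain ⟨hadm, hext⟩ := hf₀
  set A := {l | ENNReal.ofReal c ≤ ∫⁻ x, ENNReal.ofReal (f₀ x) ∂(ν l)}
  have hA : MeasurableSet A :=
    measurableSet_le measurable_const ((Measure.measurable_lintegral hadm.1.ennreal_ofReal).comp hν)
  simp_rw [ae_iff, not_lt]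
  by_contra hA0
  have hc0 : 0 < c := zero_lt_one.trans hc
  have hB := measure_preimage_inter_pos_ne_zero hπ hK hH hadm.1 hA hA0 fun l hl =>
    (ENNReal.ofReal_pos.2 hc0).trans_le hl
  have hnorm (x : X) : ‖rescaleOn π A c f₀ x‖ = rescaleOn π A c f₀ x :=
    Real.norm_of_nonneg (rescaleOn_nonneg hc0.le (hadm.2.1 x))
  have hle (x : X) : ‖rescaleOn π A c f₀ x‖ ≤ ‖f₀ x‖ := by
    simpa only [hnorm, Real.norm_of_nonneg (hadm.2.1 x)] using rescaleOn_le hc.le (hadm.2.1 x)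
  have hlt_on (x : X) (hx : x ∈ π ⁻¹' A ∩ {x | 0 < f₀ x}) : ‖rescaleOn π A c f₀ x‖ < ‖f₀ x‖ := by
    simpa only [hnorm, Real.norm_of_nonneg hx.2.le] using rescaleOn_lt (A := A) hc hx.1 hx.2
  have hlt : eLpNorm (rescaleOn π A c f₀) (ENNReal.ofReal p) μ < eLpNorm f₀ (ENNReal.ofReal p) μ :=
    eLpNorm_lt_eLpNorm_of_norm_le_of_lt_on (by simpa using hp) ENNReal.ofReal_ne_top hadm.2.2.1
      hle hB hlt_on
  exact (hext ▸ hlt).not_ge (iInf₂_le _ (isAdmissible_rescaleOn hπ hK hA hc.le (fun _ h => h) hadm))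

end Extremal

theorem statement1_general {X Λ : Type*} [MeasurableSpace X] [MeasurableSpace Λ]
    (μ : MeasureTheory.Measure X) (ν : Λ → MeasureTheory.Measure X)
    (π : X → Λ) (hπ : Measurable π) (hν : Measurable ν)
    (hK : ∀ l : Λ, ν l {x | π x ≠ l} = 0)
    (hH : ∀ N : Set X, MeasurableSet N → μ N = 0 → ∀ᵐ l ∂(μ.map π), ν l N = 0)
    (p : ℝ) (hp : 1 < p)
    (f₀ : X → ℝ) (hf₀ : IsExtremal μ ν π p f₀) :
    ∀ᵐ l ∂(μ.map π), ∫⁻ x, ENNReal.ofReal (f₀ x) ∂(ν l) = 1 := by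
  have hle : ∀ᵐ l ∂(μ.map π), ∫⁻ x, ENNReal.ofReal (f₀ x) ∂(ν l) ≤ 1 :=
    ae_le_of_forall_lt_ofReal fun c hc =>
      hf₀.ae_lintegral_lt hπ hν hK hH (zero_lt_one.trans hp) (ENNReal.one_lt_ofReal.1 hc)
  filter_upwards [hf₀.1.2.2.2, hle] with l hge hle
  exact le_antisymm hle (hge trivial)

/-- If f₀ is an extremal function for the p-modulus and mod_p(F) > 0, then
the leaf integral of f₀ equals 1 on π_*μ-almost every leaf. -/
theorem statement1 {X Λ : Type*} [MeasurableSpace X] [MeasurableSpace Λ]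
    (μ : MeasureTheory.Measure X) [SigmaFinite μ] (ν : Λ → MeasureTheory.Measure X)
    (π : X → Λ) (hπ : Measurable π) (hν : Measurable ν)
    (hK : ∀ l : Λ, ν l {x | π x ≠ l} = 0)
    (hH : ∀ N : Set X, MeasurableSet N → μ N = 0 → ∀ᵐ l ∂(μ.map π), ν l N = 0)
    (p : ℝ) (hp : 1 < p)
    (f₀ : X → ℝ) (hf₀ : IsExtremal μ ν π p f₀)
    (hpos : 0 < pModulus μ ν π p Set.univ) :
    ∀ᵐ l ∂(μ.map π), ∫⁻ x, ENNReal.ofReal (f₀ x) ∂(ν l) = 1 :=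
  statement1_general μ ν π hπ hν hK hH p hp f₀ hf₀
end

section
/- Assume in addition that ν_λ(X) ≤ C₃ for π_*μ-almost every λ, for some constant C₃ > 0 (in the paper: the leaf integrals 1̂ of the constant function 1 are bounded by C₃). If f₀ is an extremal function for the p-modulus mod_p(F), then f₀ is μ-essentially bounded below by a positive constant; explicitly, f₀ ≥ (c₁/c₂)^{1/(p-1)} / C₃ μ-almost everywhere. -/
open MeasureTheory ENNReal

/-!
On a single leaf, Hölder's inequality shows that among densities `F` with `∫ F dν_λ ≥ 1` the
weighted energy `∫ F ^ p w dν_λ` is least for `w ^ (-1/(p-1)) / ∫ w ^ (-1/(p-1)) dν_λ`. Gluing these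
leaf minimisers gives an admissible `g`, and the coarea formula turns the leafwise comparison into
`‖g‖_p ≤ ‖f₀‖_p`. The midpoint of two admissible functions is admissible, so strict convexity of
`t ↦ t ^ p` forces `f₀ = g` almost everywhere. Finally `c₁ ≤ w ≤ c₂` and `ν_λ(X) ≤ C₃` bound `g`
below by `c₂ ^ (-1/(p-1)) / (c₁ ^ (-1/(p-1)) C₃) = (c₁/c₂) ^ (1/(p-1)) / C₃`.
-/

lemma ENNReal.rpow_le_rpow_of_nonpos {x y : ℝ≥0∞} {z : ℝ} (hxy : x ≤ y) (hz : z ≤ 0) :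
    y ^ z ≤ x ^ z := by
  rw [← neg_neg z, rpow_neg y, rpow_neg x, ENNReal.inv_le_inv]
  exact rpow_le_rpow hxy (neg_nonneg.2 hz)

section Midpoint

variable {p a b : ℝ}

lemma rpow_midpoint_le (hp : 1 ≤ p) (ha : 0 ≤ a) (hb : 0 ≤ b) :
    ((a + b) / 2) ^ p ≤ (a ^ p + b ^ p) / 2 := by
  have h := (convexOn_rpow hp).2 ha hb (by norm_num : (0 : ℝ) ≤ 1 / 2)
    (by norm_num : (0 : ℝ) ≤ 1 / 2) (by norm_num)
  simp only [smul_eq_mul] at h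
  rw [show 1 / 2 * a + 1 / 2 * b = (a + b) / 2 by ring] at h
  linarith

lemma eq_of_rpow_midpoint_eq (hp : 1 < p) (ha : 0 ≤ a) (hb : 0 ≤ b)
    (h : ((a + b) / 2) ^ p = (a ^ p + b ^ p) / 2) : a = b := by
  by_contra hab
  have h' := (strictConvexOn_rpow hp).2 ha hb hab (by norm_num : (0 : ℝ) < 1 / 2)
    (by norm_num : (0 : ℝ) < 1 / 2) (by norm_num)
  simp only [smul_eq_mul] at h'
  rw [show 1 / 2 * a + 1 / 2 * b = (a + b) / 2 by ring, h] at h'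
  linarith

lemma enorm_rpow_of_nonneg (ha : 0 ≤ a) (hp : 0 ≤ p) : ‖a‖ₑ ^ p = ENNReal.ofReal (a ^ p) := by
  rw [Real.enorm_eq_ofReal ha, ENNReal.ofReal_rpow_of_nonneg ha hp]

lemma enorm_rpow_add_div_two (hp : 0 ≤ p) (ha : 0 ≤ a) (hb : 0 ≤ b) :
    (‖a‖ₑ ^ p + ‖b‖ₑ ^ p) / 2 = ENNReal.ofReal ((a ^ p + b ^ p) / 2) := by
  rw [enorm_rpow_of_nonneg ha hp, enorm_rpow_of_nonneg hb hp, ← ENNReal.ofReal_add (by positivity)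
    (by positivity), ENNReal.ofReal_div_of_pos two_pos, ENNReal.ofReal_ofNat]

lemma enorm_midpoint_rpow_le (hp : 1 ≤ p) (ha : 0 ≤ a) (hb : 0 ≤ b) :
    ‖(a + b) / 2‖ₑ ^ p ≤ (‖a‖ₑ ^ p + ‖b‖ₑ ^ p) / 2 := by
  rw [enorm_rpow_of_nonneg (by positivity) (by linarith), enorm_rpow_add_div_two (by linarith) ha hb]
  exact ENNReal.ofReal_le_ofReal (rpow_midpoint_le hp ha hb)

lemma eq_of_enorm_midpoint_rpow_eq (hp : 1 < p) (ha : 0 ≤ a) (hb : 0 ≤ b)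
    (h : ‖(a + b) / 2‖ₑ ^ p = (‖a‖ₑ ^ p + ‖b‖ₑ ^ p) / 2) : a = b := by
  rw [enorm_rpow_of_nonneg (by positivity) (by linarith), enorm_rpow_add_div_two (by linarith) ha hb,
    ENNReal.ofReal_eq_ofReal_iff (by positivity) (by positivity)] at h
  exact eq_of_rpow_midpoint_eq hp ha hb h

end Midpoint

section Lp

variable {X : Type*} [MeasurableSpace X] {μ : Measure X}

lemma lintegral_add_div_two {f g : X → ℝ≥0∞} (hf : AEMeasurable f μ) :
    ∫⁻ x, (f x + g x) / 2 ∂μ = (∫⁻ x, f x ∂μ + ∫⁻ x, g x ∂μ) / 2 := by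
  simp_rw [div_eq_mul_inv]
  rw [lintegral_mul_const' _ _ (by simp), lintegral_add_left' hf]

lemma eLpNorm_ofReal_le_eLpNorm_ofReal_iff {ε : Type*} [ENorm ε] {p : ℝ} (hp : 0 < p)
    {f g : X → ε} :
    eLpNorm f (.ofReal p) μ ≤ eLpNorm g (.ofReal p) μ ↔
      ∫⁻ x, ‖f x‖ₑ ^ p ∂μ ≤ ∫⁻ x, ‖g x‖ₑ ^ p ∂μ := by
  rw [eLpNorm_eq_lintegral_rpow_enorm_toReal (by simpa) ofReal_ne_top,
    eLpNorm_eq_lintegral_rpow_enorm_toReal (by simpa) ofReal_ne_top, toReal_ofReal hp.le,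
    ENNReal.rpow_le_rpow_iff (by positivity)]

lemma ae_eq_of_eLpNorm_le_eLpNorm_midpoint {p : ℝ} (hp : 1 < p) {f g : X → ℝ}
    (hf : MemLp f (.ofReal p) μ) (hg : AEMeasurable g μ) (hf₀ : ∀ x, 0 ≤ f x)
    (hg₀ : ∀ x, 0 ≤ g x) (hgf : eLpNorm g (.ofReal p) μ ≤ eLpNorm f (.ofReal p) μ)
    (hfm : eLpNorm f (.ofReal p) μ ≤ eLpNorm (fun x => (f x + g x) / 2) (.ofReal p) μ) :
    f =ᵐ[μ] g := by
  have hp₀ : 0 < p := by linarith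
  rw [eLpNorm_ofReal_le_eLpNorm_ofReal_iff hp₀] at hgf hfm
  have hf_fin : ∫⁻ x, ‖f x‖ₑ ^ p ∂μ ≠ ∞ := by
    simpa [toReal_ofReal hp₀.le] using (lintegral_rpow_enorm_lt_top_of_eLpNorm_lt_top
      (by simpa) ofReal_ne_top hf.2).ne
  have hf_meas : AEMeasurable (fun x => ‖f x‖ₑ ^ p) μ :=
    hf.1.aemeasurable.enorm.pow_const p
  have hmid (x : X) : ‖(f x + g x) / 2‖ₑ ^ p ≤ (‖f x‖ₑ ^ p + ‖g x‖ₑ ^ p) / 2 :=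
    enorm_midpoint_rpow_le hp.le (hf₀ x) (hg₀ x)
  have hmean : ∫⁻ x, (‖f x‖ₑ ^ p + ‖g x‖ₑ ^ p) / 2 ∂μ ≤ ∫⁻ x, ‖f x‖ₑ ^ p ∂μ := by
    rw [lintegral_add_div_two hf_meas]
    calc _ ≤ (∫⁻ x, ‖f x‖ₑ ^ p ∂μ + ∫⁻ x, ‖f x‖ₑ ^ p ∂μ) / 2 := by gcongr
      _ = _ := by rw [ENNReal.add_div, ENNReal.add_halves]
  have hae := ae_eq_of_ae_le_of_lintegral_le (ae_of_all _ hmid)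
    (ne_top_of_le_ne_top hf_fin ((lintegral_mono hmid).trans hmean))
    ((hf_meas.add (hg.enorm.pow_const p)).div_const 2) (hmean.trans hfm)
  filter_upwards [hae] with x hx
  exact eq_of_enorm_midpoint_rpow_eq hp (hf₀ x) (hg₀ x) hx

end Lp

section Modulus

variable {X Λ : Type*} [MeasurableSpace X] [MeasurableSpace Λ] {μ : Measure X}
  {ν : Λ → Measure X} {π : X → Λ} {p : ℝ} {S : Set Λ} {f g : X → ℝ}

lemma pModulus_le_eLpNorm (hf : IsAdmissible μ ν π p S f) :
    pModulus μ ν π p S ≤ eLpNorm f (.ofReal p) μ :=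
  iInf₂_le f hf

lemma IsAdmissible.midpoint (hf : IsAdmissible μ ν π p S f) (hg : IsAdmissible μ ν π p S g) :
    IsAdmissible μ ν π p S fun x => (f x + g x) / 2 := by
  obtain ⟨hf_meas, hf₀, hf_Lp, hf_leaf⟩ := hf
  obtain ⟨hg_meas, hg₀, hg_Lp, hg_leaf⟩ := hg
  refine ⟨(hf_meas.add hg_meas).div_const 2, fun x => by linarith [hf₀ x, hg₀ x], ?_, ?_⟩
  · simpa only [div_eq_mul_inv, Pi.add_apply] using (hf_Lp.add hg_Lp).mul_const 2⁻¹
  filter_upwards [hf_leaf, hg_leaf] with l hfl hgl hl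
  have hsplit (x : X) : ENNReal.ofReal ((f x + g x) / 2) =
      (ENNReal.ofReal (f x) + ENNReal.ofReal (g x)) / 2 := by
    rw [ENNReal.ofReal_div_of_pos two_pos, ENNReal.ofReal_add (hf₀ x) (hg₀ x),
      ENNReal.ofReal_ofNat]
  rw [lintegral_congr hsplit, lintegral_add_div_two hf_meas.ennreal_ofReal.aemeasurable,
    ← ENNReal.add_halves 1, ENNReal.add_div]
  gcongr
  exacts [hfl hl, hgl hl]

lemma IsExtremal.ae_eq_of_eLpNorm_le (hp : 1 < p) {f₀ : X → ℝ} (hf₀ : IsExtremal μ ν π p f₀)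
    (hg : IsAdmissible μ ν π p Set.univ g)
    (hgf : eLpNorm g (.ofReal p) μ ≤ eLpNorm f₀ (.ofReal p) μ) : f₀ =ᵐ[μ] g :=
  ae_eq_of_eLpNorm_le_eLpNorm_midpoint hp hf₀.1.2.2.1 hg.1.aemeasurable hf₀.1.2.1 hg.2.1 hgf
    (hf₀.2 ▸ pModulus_le_eLpNorm (hf₀.1.midpoint hg))

end Modulus

section Leaf

variable {X : Type*} [MeasurableSpace X] {ρ : Measure X} {p : ℝ} {W : X → ℝ≥0∞}

/-- For a leaf `ρ` with weight `W = 1 / JΦ`, `dualMass ρ W p ^ (1 - p)` is the least weighted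
energy `∫ F ^ p * W dρ` of a density `F` with `∫ F dρ ≥ 1`. -/
noncomputable def dualMass (ρ : Measure X) (W : X → ℝ≥0∞) (p : ℝ) : ℝ≥0∞ :=
  ∫⁻ x, W x ^ (-(p - 1)⁻¹) ∂ρ

lemma rpow_neg_inv_sub_one_rpow_mul_self (hp : 1 < p) {a : ℝ≥0∞} (ha₀ : a ≠ 0) (ha : a ≠ ∞) :
    (a ^ (-(p - 1)⁻¹)) ^ p * a = a ^ (-(p - 1)⁻¹) := by
  have hp₁ : p - 1 ≠ 0 := by linarith
  nth_rewrite 2 [← rpow_one a]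
  rw [← rpow_mul, ← rpow_add _ _ ha₀ ha]
  congr 1
  field_simp
  ring

lemma dualMass_le_mul (hp : 1 < p) {a : ℝ≥0∞} (hW : ∀ x, a ≤ W x) :
    dualMass ρ W p ≤ a ^ (-(p - 1)⁻¹) * ρ Set.univ := by
  have hβ : -(p - 1)⁻¹ ≤ 0 := neg_nonpos.2 (inv_nonneg.2 (by linarith))
  rw [← lintegral_const]
  exact lintegral_mono fun x => ENNReal.rpow_le_rpow_of_nonpos (hW x) hβ

lemma dualMass_ne_zero (hp : 1 < p) (hW : Measurable W) (hW_top : ∀ x, W x ≠ ∞) (hρ : ρ ≠ 0) :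
    dualMass ρ W p ≠ 0 := by
  have hβ : -(p - 1)⁻¹ < 0 := neg_neg_iff_pos.2 (inv_pos.2 (by linarith))
  rw [dualMass, Ne, lintegral_eq_zero_iff (hW.pow_const _)]
  intro h
  refine hρ (ae_eq_bot.1 (Filter.eventually_false_iff_eq_bot.1 ?_))
  filter_upwards [h] with x hx
  simp [rpow_eq_zero_iff, hW_top x, hβ.not_gt] at hx

/-- Hölder's inequality with exponents `p` and `p / (p - 1)`, applied to
`F = (F * W ^ (1 / p)) * W ^ (-1 / p)`. -/
lemma dualMass_rpow_one_sub_le_lintegral (hp : 1 < p) {F : X → ℝ≥0∞} (hF : AEMeasurable F ρ)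
    (hW : AEMeasurable W ρ) (hW₀ : ∀ x, W x ≠ 0) (hW_top : ∀ x, W x ≠ ∞)
    (hF₁ : 1 ≤ ∫⁻ x, F x ∂ρ) :
    dualMass ρ W p ^ (1 - p) ≤ ∫⁻ x, F x ^ p * W x ∂ρ := by
  have hp₀ : 0 < p := by linarith
  have hp₁ : p - 1 ≠ 0 := by linarith
  set A := dualMass ρ W p
  set B := ∫⁻ x, F x ^ p * W x ∂ρ
  have holder : 1 ≤ B ^ p⁻¹ * A ^ (1 - p⁻¹) := by
    calc 1 ≤ ∫⁻ x, F x ∂ρ := hF₁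
      _ = ∫⁻ x, ((fun x => F x * W x ^ p⁻¹) * fun x => W x ^ (-p⁻¹)) x ∂ρ := by
        congr 1 with x
        rw [Pi.mul_apply, mul_assoc, ← rpow_add _ _ (hW₀ x) (hW_top x), add_neg_cancel,
          rpow_zero, mul_one]
      _ ≤ _ := ENNReal.lintegral_mul_le_Lp_mul_Lq ρ (Real.HolderConjugate.conjExponent hp)
          (hF.mul (hW.pow_const _)) (hW.pow_const _)
      _ = B ^ p⁻¹ * A ^ (1 - p⁻¹) := by
        congr 2
        · refine lintegral_congr fun x => ?_
          rw [mul_rpow_of_nonneg _ _ hp₀.le, ← rpow_mul, inv_mul_cancel₀ hp₀.ne', rpow_one]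
        · exact one_div p
        · refine lintegral_congr fun x => ?_
          rw [← rpow_mul, Real.conjExponent]
          congr 1
          field_simp
        · rw [Real.conjExponent]
          field_simp
  have h₁ : 1 ≤ B * A ^ (p - 1) := by
    have := ENNReal.rpow_le_rpow holder hp₀.le
    rwa [one_rpow, mul_rpow_of_nonneg _ _ hp₀.le, ← rpow_mul, ← rpow_mul, inv_mul_cancel₀ hp₀.ne',
      rpow_one, sub_mul, one_mul, inv_mul_cancel₀ hp₀.ne'] at this
  rw [show 1 - p = -(p - 1) by ring, rpow_neg, ENNReal.inv_le_iff_le_mul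
    (fun _ hA => by simp [hA] at h₁) (fun _ hB => by simp [hB] at h₁), mul_comm]
  exact h₁

lemma lintegral_div_dualMass (hA₀ : dualMass ρ W p ≠ 0) (hA : dualMass ρ W p ≠ ∞) :
    ∫⁻ x, W x ^ (-(p - 1)⁻¹) / dualMass ρ W p ∂ρ = 1 := by
  simp_rw [div_eq_mul_inv]
  rw [lintegral_mul_const' _ _ (inv_ne_top.2 hA₀)]
  exact ENNReal.mul_inv_cancel hA₀ hA

lemma lintegral_div_dualMass_rpow_mul (hp : 1 < p) (hW₀ : ∀ x, W x ≠ 0)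
    (hW_top : ∀ x, W x ≠ ∞) (hA₀ : dualMass ρ W p ≠ 0) (hA : dualMass ρ W p ≠ ∞) :
    ∫⁻ x, (W x ^ (-(p - 1)⁻¹) / dualMass ρ W p) ^ p * W x ∂ρ = dualMass ρ W p ^ (1 - p) := by
  have hp₀ : 0 < p := by linarith
  have hpoint (x : X) : (W x ^ (-(p - 1)⁻¹) / dualMass ρ W p) ^ p * W x =
      W x ^ (-(p - 1)⁻¹) * (dualMass ρ W p ^ p)⁻¹ := by
    rw [div_rpow_of_nonneg _ _ hp₀.le, div_eq_mul_inv, mul_right_comm,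
      rpow_neg_inv_sub_one_rpow_mul_self hp (hW₀ x) (hW_top x)]
  rw [lintegral_congr hpoint, lintegral_mul_const' _ _ (inv_ne_top.2 (rpow_pos
    (pos_iff_ne_zero.2 hA₀) hA).ne'), show 1 - p = 1 + -p by ring, rpow_add _ _ hA₀ hA, rpow_one,
    rpow_neg]
  rfl

end Leaf

section Foliation

variable {X Λ : Type*} [MeasurableSpace X] {ν : Λ → Measure X} {π : X → Λ} {p : ℝ}
  {W F : X → ℝ≥0∞} {S : Set Λ} {l : Λ}

def goodLeaves (ν : Λ → Measure X) (F W : X → ℝ≥0∞) (p : ℝ) : Set Λ :=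
  {l | 1 ≤ ∫⁻ x, F x ∂ν l ∧ dualMass (ν l) W p ≠ ∞}

/-- On each leaf of `S`, the density of least weighted energy among those of integral `1`. -/
noncomputable def leafExtremal (ν : Λ → Measure X) (π : X → Λ) (W : X → ℝ≥0∞) (p : ℝ)
    (S : Set Λ) : X → ℝ≥0∞ :=
  (π ⁻¹' S).indicator fun x => W x ^ (-(p - 1)⁻¹) / dualMass (ν (π x)) W p

lemma dualMass_ne_zero_of_mem_goodLeaves (hp : 1 < p) (hW : Measurable W)
    (hW_top : ∀ x, W x ≠ ∞) (hl : l ∈ goodLeaves ν F W p) : dualMass (ν l) W p ≠ 0 :=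
  dualMass_ne_zero hp hW hW_top fun h => by simpa [h] using hl.1

lemma leafExtremal_ne_top (hp : 1 < p) (hW : Measurable W) (hW₀ : ∀ x, W x ≠ 0)
    (hW_top : ∀ x, W x ≠ ∞) (x : X) : leafExtremal ν π W p (goodLeaves ν F W p) x ≠ ∞ := by
  by_cases hx : π x ∈ goodLeaves ν F W p
  · rw [leafExtremal, Set.indicator_of_mem (show x ∈ π ⁻¹' goodLeaves ν F W p from hx)]
    refine (div_lt_top ?_ (dualMass_ne_zero_of_mem_goodLeaves hp hW hW_top hx)).ne
    simp [rpow_eq_top_iff, hW₀ x, hW_top x]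
  · simp [leafExtremal, hx]

lemma leafExtremal_ae_eq_of_mem (hK : ∀ᵐ x ∂ν l, π x = l) (hl : l ∈ S) :
    leafExtremal ν π W p S =ᵐ[ν l] fun x => W x ^ (-(p - 1)⁻¹) / dualMass (ν l) W p := by
  filter_upwards [hK] with x hx
  simp [leafExtremal, hx, hl]

lemma leafExtremal_ae_eq_zero_of_notMem (hK : ∀ᵐ x ∂ν l, π x = l) (hl : l ∉ S) :
    leafExtremal ν π W p S =ᵐ[ν l] 0 := by
  filter_upwards [hK] with x hx
  simp [leafExtremal, hx, hl]

lemma lintegral_leafExtremal_rpow_mul_le (hp : 1 < p) (hK : ∀ᵐ x ∂ν l, π x = l)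
    (hF : Measurable F) (hW : Measurable W) (hW₀ : ∀ x, W x ≠ 0) (hW_top : ∀ x, W x ≠ ∞) :
    ∫⁻ x, leafExtremal ν π W p (goodLeaves ν F W p) x ^ p * W x ∂ν l ≤
      ∫⁻ x, F x ^ p * W x ∂ν l := by
  by_cases hl : l ∈ goodLeaves ν F W p
  · have hA₀ := dualMass_ne_zero_of_mem_goodLeaves hp hW hW_top hl
    calc _ = ∫⁻ x, (W x ^ (-(p - 1)⁻¹) / dualMass (ν l) W p) ^ p * W x ∂ν l :=
          lintegral_congr_ae ((leafExtremal_ae_eq_of_mem hK hl).mono fun x hx => by rw [hx])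
      _ = dualMass (ν l) W p ^ (1 - p) :=
          lintegral_div_dualMass_rpow_mul hp hW₀ hW_top hA₀ hl.2
      _ ≤ _ := dualMass_rpow_one_sub_le_lintegral hp hF.aemeasurable hW.aemeasurable hW₀ hW_top
          hl.1
  · have hp₀ : 0 < p := by linarith
    rw [lintegral_congr_ae ((leafExtremal_ae_eq_zero_of_notMem hK hl).mono fun x hx => by
      rw [hx, Pi.zero_apply, zero_rpow_of_pos hp₀, zero_mul])]
    simp

lemma le_toReal_leafExtremal (hp : 1 < p) {w : X → ℝ} (hw : Measurable w)
    {c₁ c₂ C₃ : ℝ} (hc₁ : 0 < c₁) (hw₁ : ∀ y, c₁ ≤ w y) {x : X} (hw₂ : w x ≤ c₂) (hC₃ : 0 < C₃)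
    (hx : π x ∈ goodLeaves ν F (fun y => ENNReal.ofReal (w y)) p)
    (hνx : ν (π x) Set.univ ≤ ENNReal.ofReal C₃) :
    (c₁ / c₂) ^ (1 / (p - 1)) / C₃ ≤
      (leafExtremal ν π (fun y => ENNReal.ofReal (w y)) p
        (goodLeaves ν F (fun y => ENNReal.ofReal (w y)) p) x).toReal := by
  set β := (p - 1)⁻¹
  have hwx : 0 < w x := hc₁.trans_le (hw₁ x)
  have hc₂ : 0 < c₂ := hwx.trans_le hw₂
  set A := dualMass (ν (π x)) (fun y => ENNReal.ofReal (w y)) p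
  have hA₀ : 0 < A.toReal :=
    toReal_pos (dualMass_ne_zero_of_mem_goodLeaves hp hw.ennreal_ofReal (fun _ => ofReal_ne_top)
      hx) hx.2
  have hA : A.toReal ≤ c₁ ^ (-β) * C₃ := by
    have h : A ≤ ENNReal.ofReal c₁ ^ (-β) * ENNReal.ofReal C₃ :=
      (dualMass_le_mul hp fun y => ofReal_le_ofReal (hw₁ y)).trans (by gcongr)
    rw [ofReal_rpow_of_pos hc₁, ← ofReal_mul (by positivity)] at h
    exact toReal_le_of_le_ofReal (by positivity) h
  rw [leafExtremal, Set.indicator_of_mem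
    (show x ∈ π ⁻¹' goodLeaves ν F (fun y => ENNReal.ofReal (w y)) p from hx), toReal_div,
    ofReal_rpow_of_pos hwx, toReal_ofReal (by positivity), one_div]
  calc (c₁ / c₂) ^ β / C₃ = c₂ ^ (-β) / (c₁ ^ (-β) * C₃) := by
        rw [Real.div_rpow hc₁.le hc₂.le, Real.rpow_neg hc₁.le, Real.rpow_neg hc₂.le]
        field_simp
    _ ≤ w x ^ (-β) / A.toReal :=
        div_le_div₀ (by positivity) (Real.rpow_le_rpow_of_nonpos hwx hw₂
          (neg_nonpos.2 (inv_nonneg.2 (by linarith)))) hA₀ hA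

variable [MeasurableSpace Λ] {μ : Measure X}

lemma measurable_dualMass (hν : Measurable ν) (hW : Measurable W) :
    Measurable fun l => dualMass (ν l) W p :=
  (Measure.measurable_lintegral (hW.pow_const _)).comp hν

lemma measurableSet_goodLeaves (hν : Measurable ν) (hF : Measurable F) (hW : Measurable W) :
    MeasurableSet (goodLeaves ν F W p) :=
  (measurableSet_le measurable_const ((Measure.measurable_lintegral hF).comp hν)).inter
    (measurable_dualMass hν hW (measurableSet_singleton ∞).compl)

lemma measurable_leafExtremal (hν : Measurable ν) (hπ : Measurable π) (hW : Measurable W)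
    (hS : MeasurableSet S) : Measurable (leafExtremal ν π W p S) :=
  ((hW.pow_const _).div ((measurable_dualMass hν hW).comp hπ)).indicator (hπ hS)

lemma lintegral_leafExtremal_rpow_le (hp : 1 < p) (hν : Measurable ν) (hπ : Measurable π)
    (hK : ∀ l, ∀ᵐ x ∂ν l, π x = l) (hF : Measurable F) (hW : Measurable W)
    (hW₀ : ∀ x, W x ≠ 0) (hW_top : ∀ x, W x ≠ ∞) {σ : Measure Λ}
    (hcoarea : ∀ h : X → ℝ≥0∞, Measurable h →
      ∫⁻ x, h x ∂μ = ∫⁻ l, (∫⁻ x, h x * W x ∂(ν l)) ∂σ) :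
    ∫⁻ x, leafExtremal ν π W p (goodLeaves ν F W p) x ^ p ∂μ ≤ ∫⁻ x, F x ^ p ∂μ := by
  have hmeas := measurable_leafExtremal (p := p) hν hπ hW
    (measurableSet_goodLeaves (p := p) hν hF hW)
  rw [hcoarea _ (hmeas.pow_const p), hcoarea _ (hF.pow_const p)]
  exact lintegral_mono fun l => lintegral_leafExtremal_rpow_mul_le hp (hK l) hF hW hW₀ hW_top

lemma isAdmissible_toReal_leafExtremal (hp : 1 < p) (hν : Measurable ν) (hπ : Measurable π)
    (hK : ∀ l, ∀ᵐ x ∂ν l, π x = l) (hF : Measurable F) (hW : Measurable W)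
    (hW₀ : ∀ x, W x ≠ 0) (hW_top : ∀ x, W x ≠ ∞)
    (hgood : ∀ᵐ l ∂μ.map π, l ∈ goodLeaves ν F W p)
    (hLp : eLpNorm (fun x => (leafExtremal ν π W p (goodLeaves ν F W p) x).toReal)
      (.ofReal p) μ < ∞) :
    IsAdmissible μ ν π p Set.univ
      fun x => (leafExtremal ν π W p (goodLeaves ν F W p) x).toReal := by
  have hmeas := measurable_leafExtremal (p := p) hν hπ hW
    (measurableSet_goodLeaves (p := p) hν hF hW)
  refine ⟨hmeas.ennreal_toReal, fun _ => toReal_nonneg,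
    ⟨hmeas.ennreal_toReal.aestronglyMeasurable, hLp⟩, ?_⟩
  filter_upwards [hgood] with l hl _
  simp_rw [ofReal_toReal (leafExtremal_ne_top hp hW hW₀ hW_top _)]
  rw [lintegral_congr_ae (leafExtremal_ae_eq_of_mem (hK l) hl),
    lintegral_div_dualMass (dualMass_ne_zero_of_mem_goodLeaves hp hW hW_top hl) hl.2]

lemma ae_mem_goodLeaves (hp : 1 < p) {f : X → ℝ} (hf : IsAdmissible μ ν π p Set.univ f)
    {a : ℝ≥0∞} (ha : a ≠ 0) (hW : ∀ x, a ≤ W x)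
    (hν_fin : ∀ᵐ l ∂μ.map π, ν l Set.univ ≠ ∞) :
    ∀ᵐ l ∂μ.map π, l ∈ goodLeaves ν (fun x => ENNReal.ofReal (f x)) W p := by
  have ha' : a ^ (-(p - 1)⁻¹) ≠ ∞ := by simp [rpow_eq_top_iff, ha, hp.le]
  filter_upwards [hf.2.2.2, hν_fin] with l hl hνl
  exact ⟨hl trivial, ne_top_of_le_ne_top (mul_ne_top ha' hνl) (dualMass_le_mul hp hW)⟩

end Foliation

theorem statement8_general {X Λ : Type*} [MeasurableSpace X] [MeasurableSpace Λ]
    (μ : MeasureTheory.Measure X) (ν : Λ → MeasureTheory.Measure X)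
    (π : X → Λ) (hπ : Measurable π) (hν : Measurable ν)
    (hK : ∀ l : Λ, ν l {x | π x ≠ l} = 0)
    -- the abstract coarea formula
    (σ : MeasureTheory.Measure Λ)
    (c₁ c₂ : ℝ) (hc₁ : 0 < c₁)
    (w : X → ℝ) (hw : Measurable w) (hw₁ : ∀ x, c₁ ≤ w x) (hw₂ : ∀ x, w x ≤ c₂)
    (hcoarea : ∀ h : X → ℝ≥0∞, Measurable h →
      ∫⁻ x, h x ∂μ = ∫⁻ l, (∫⁻ x, h x * ENNReal.ofReal (w x) ∂(ν l)) ∂σ)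
    (p : ℝ) (hp : 1 < p)
    (C₃ : ℝ) (hC₃ : 0 < C₃)
    (hleaf : ∀ᵐ l ∂(μ.map π), ν l Set.univ ≤ ENNReal.ofReal C₃)
    (f₀ : X → ℝ) (hf₀ : IsExtremal μ ν π p f₀) :
    ∀ᵐ x ∂μ, (c₁ / c₂) ^ (1 / (p - 1)) / C₃ ≤ f₀ x := by
  set W : X → ℝ≥0∞ := fun x => ENNReal.ofReal (w x)
  set F : X → ℝ≥0∞ := fun x => ENNReal.ofReal (f₀ x)
  set g : X → ℝ := fun x => (leafExtremal ν π W p (goodLeaves ν F W p) x).toReal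
  have hW : Measurable W := hw.ennreal_ofReal
  have hF : Measurable F := hf₀.1.1.ennreal_ofReal
  have hW₀ (x : X) : W x ≠ 0 := (ofReal_pos.2 (hc₁.trans_le (hw₁ x))).ne'
  have hW_top (x : X) : W x ≠ ∞ := ofReal_ne_top
  have hK' (l : Λ) : ∀ᵐ x ∂ν l, π x = l := ae_iff.2 (hK l)
  have hgood : ∀ᵐ l ∂μ.map π, l ∈ goodLeaves ν F W p :=
    ae_mem_goodLeaves hp hf₀.1 (ofReal_pos.2 hc₁).ne' (fun x => ofReal_le_ofReal (hw₁ x))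
      (hleaf.mono fun _ hl => ne_top_of_le_ne_top ofReal_ne_top hl)
  have hg_le : eLpNorm g (.ofReal p) μ ≤ eLpNorm f₀ (.ofReal p) μ := by
    rw [eLpNorm_ofReal_le_eLpNorm_ofReal_iff (by linarith)]
    simp_rw [g, Real.enorm_toReal (leafExtremal_ne_top hp hW hW₀ hW_top _),
      Real.enorm_eq_ofReal (hf₀.1.2.1 _)]
    exact lintegral_leafExtremal_rpow_le hp hν hπ hK' hF hW hW₀ hW_top hcoarea
  have hg : IsAdmissible μ ν π p Set.univ g :=
    isAdmissible_toReal_leafExtremal hp hν hπ hK' hF hW hW₀ hW_top hgood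
      (hg_le.trans_lt hf₀.1.2.2.1.2)
  filter_upwards [hf₀.ae_eq_of_eLpNorm_le hp hg hg_le,
    ae_of_ae_map hπ.aemeasurable (hgood.and hleaf)] with x hfg hx
  rw [hfg]
  exact le_toReal_leafExtremal hp hw hc₁ hw₁ (hw₂ x) hC₃ hx.1 hx.2

/-- if moreover the total leaf measures are bounded by C₃ for almost every leaf,
then an extremal function f₀ for the p-modulus satisfies
f₀ ≥ (c₁/c₂)^{1/(p-1)} / C₃ μ-almost everywhere. -/
theorem statement8 {X Λ : Type*} [MeasurableSpace X] [MeasurableSpace Λ]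
    (μ : MeasureTheory.Measure X) [SigmaFinite μ] (ν : Λ → MeasureTheory.Measure X)
    (π : X → Λ) (hπ : Measurable π) (hν : Measurable ν)
    (hK : ∀ l : Λ, ν l {x | π x ≠ l} = 0)
    -- the abstract coarea formula
    (σ : MeasureTheory.Measure Λ) [SigmaFinite σ]
    (c₁ c₂ : ℝ) (hc₁ : 0 < c₁) (hc₁₂ : c₁ ≤ c₂)
    (w : X → ℝ) (hw : Measurable w) (hw₁ : ∀ x, c₁ ≤ w x) (hw₂ : ∀ x, w x ≤ c₂)
    (hcoarea : ∀ h : X → ℝ≥0∞, Measurable h →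
      ∫⁻ x, h x ∂μ = ∫⁻ l, (∫⁻ x, h x * ENNReal.ofReal (w x) ∂(ν l)) ∂σ)
    (p : ℝ) (hp : 1 < p)
    (C₃ : ℝ) (hC₃ : 0 < C₃)
    (hleaf : ∀ᵐ l ∂(μ.map π), ν l Set.univ ≤ ENNReal.ofReal C₃)
    (f₀ : X → ℝ) (hf₀ : IsExtremal μ ν π p f₀) :
    ∀ᵐ x ∂μ, (c₁ / c₂) ^ (1 / (p - 1)) / C₃ ≤ f₀ x :=
  statement8_general μ ν π hπ hν hK σ c₁ c₂ hc₁ w hw hw₁ hw₂ hcoarea p hp C₃ hC₃ hleaf f₀ hf₀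
end
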